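/- Let S be a nonempty finite set of linear endomorphisms of a finite-dimensional real normed space. Then σ̂(S) < 1 if and only if for every infinite sequence a_1, a_2, a_3, ... of elements of S one has ‖a_n ∘ ⋯ ∘ a_2 ∘ a_1‖ → 0 as n → ∞. -/

import Mathlib

open Filter

/-- `σ̂ₙ(S)`: the supremum of operator norms of `n`-fold products (compositions) of
elements of `S`. -/
noncomputable def sigmaN {V : Type*} [NormedAddCommGroup V] [NormedSpace ℝ V]
    (S : Set (V →L[ℝ] V)) (n : ℕ) : ℝ :=
  sSup {x : ℝ | ∃ l : List (V →L[ℝ] V), l.length = n ∧ (∀ a ∈ l, a ∈ S) ∧ x = ‖l.prod‖}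

/-- The joint spectral radius of `S`. -/
noncomputable def jointSpecRad {V : Type*} [NormedAddCommGroup V] [NormedSpace ℝ V]
    (S : Set (V →L[ℝ] V)) : ℝ :=
  sInf {x : ℝ | ∃ n : ℕ, 1 ≤ n ∧ x = sigmaN S n ^ ((1 : ℝ) / n)}

section Aux

variable {V : Type*} [NormedAddCommGroup V] [NormedSpace ℝ V]

/-- Product in application order: for `l = [a₀, a₁, …]` this is `… * a₁ * a₀`. -/
noncomputable def Pprod (l : List (V →L[ℝ] V)) : V →L[ℝ] V := l.reverse.prod

lemma Pprod_append (u v : List (V →L[ℝ] V)) : Pprod (u ++ v) = Pprod v * Pprod u := by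
  simp [Pprod, List.reverse_append]

lemma Pprod_take_drop (l : List (V →L[ℝ] V)) (k : ℕ) :
    Pprod l = Pprod (l.drop k) * Pprod (l.take k) := by
  conv_lhs => rw [← List.take_append_drop k l]
  rw [Pprod_append]

variable {S : Set (V →L[ℝ] V)}

lemma wordSet_finite (hfin : S.Finite) (n : ℕ) :
    {x : ℝ | ∃ l : List (V →L[ℝ] V), l.length = n ∧ (∀ a ∈ l, a ∈ S) ∧ x = ‖l.prod‖}.Finite := by
  haveI : Finite S := hfin.to_subtype
  have h1 : {l : List S | l.length = n}.Finite := List.finite_length_eq _ n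
  have h2 : ((fun l : List S => ‖(l.map (Subtype.val)).prod‖) '' {l | l.length = n}).Finite :=
    h1.image _
  refine h2.subset ?_
  rintro x ⟨l, hlen, hmem, rfl⟩
  refine ⟨l.attach.map (fun a => (⟨a.1, hmem a.1 a.2⟩ : S)), by simpa using hlen, ?_⟩
  simp [List.map_map, Function.comp]

lemma wordSet_nonempty (hne : S.Nonempty) (n : ℕ) :
    {x : ℝ | ∃ l : List (V →L[ℝ] V), l.length = n ∧ (∀ a ∈ l, a ∈ S) ∧ x = ‖l.prod‖}.Nonempty := by
  obtain ⟨s, hs⟩ := hne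
  exact ⟨‖(List.replicate n s).prod‖, List.replicate n s, by simp,
    fun a ha => by rw [List.eq_of_mem_replicate ha]; exact hs, rfl⟩

lemma norm_prod_le_sigmaN (hfin : S.Finite) {l : List (V →L[ℝ] V)} {n : ℕ}
    (hlen : l.length = n) (hmem : ∀ a ∈ l, a ∈ S) : ‖l.prod‖ ≤ sigmaN S n :=
  le_csSup (wordSet_finite hfin n).bddAbove ⟨l, hlen, hmem, rfl⟩

lemma norm_Pprod_le_sigmaN (hfin : S.Finite) {l : List (V →L[ℝ] V)} {n : ℕ}
    (hlen : l.length = n) (hmem : ∀ a ∈ l, a ∈ S) : ‖Pprod l‖ ≤ sigmaN S n :=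
  norm_prod_le_sigmaN hfin (by simpa using hlen) (fun a ha => hmem a (List.mem_reverse.mp ha))

lemma sigmaN_nonneg (hfin : S.Finite) (hne : S.Nonempty) (n : ℕ) : 0 ≤ sigmaN S n := by
  obtain ⟨x, l, hlen, hmem, rfl⟩ := wordSet_nonempty hne n
  exact le_trans (norm_nonneg _) (norm_prod_le_sigmaN hfin hlen hmem)

lemma sigmaN_le (hne : S.Nonempty) {n : ℕ} {c : ℝ}
    (h : ∀ l : List (V →L[ℝ] V), l.length = n → (∀ a ∈ l, a ∈ S) → ‖l.prod‖ ≤ c) :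
    sigmaN S n ≤ c := by
  refine csSup_le (wordSet_nonempty hne n) ?_
  rintro x ⟨l, hlen, hmem, rfl⟩
  exact h l hlen hmem

lemma jointSpecRad_lt_one_of (hfin : S.Finite) (hne : S.Nonempty) {n : ℕ} (hn : 1 ≤ n)
    (h : sigmaN S n < 1) : jointSpecRad S < 1 := by
  have hb : BddBelow {x : ℝ | ∃ m : ℕ, 1 ≤ m ∧ x = sigmaN S m ^ ((1 : ℝ) / m)} := by
    refine ⟨0, ?_⟩
    rintro x ⟨m, hm, rfl⟩
    exact Real.rpow_nonneg (sigmaN_nonneg hfin hne m) _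
  have h1 : jointSpecRad S ≤ sigmaN S n ^ ((1 : ℝ) / n) :=
    csInf_le hb ⟨n, hn, rfl⟩
  have h2 : sigmaN S n ^ ((1 : ℝ) / n) < 1 :=
    Real.rpow_lt_one (sigmaN_nonneg hfin hne n) h (by positivity)
  linarith

lemma exists_sigmaN_lt_one (hfin : S.Finite) (hne : S.Nonempty)
    (h : jointSpecRad S < 1) : ∃ n : ℕ, 1 ≤ n ∧ sigmaN S n < 1 := by
  have hne' : {x : ℝ | ∃ m : ℕ, 1 ≤ m ∧ x = sigmaN S m ^ ((1 : ℝ) / m)}.Nonempty :=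
    ⟨sigmaN S 1 ^ ((1 : ℝ) / (1:ℕ)), 1, le_rfl, by norm_num⟩
  obtain ⟨x, ⟨m, hm, rfl⟩, hx⟩ := exists_lt_of_csInf_lt hne' h
  refine ⟨m, hm, ?_⟩
  by_contra hσ
  push_neg at hσ
  have : (1 : ℝ) ≤ sigmaN S m ^ ((1 : ℝ) / m) :=
    Real.one_le_rpow hσ (by positivity)
  linarith

/-- The key decay estimate. -/
lemma decay_bound (hfin : S.Finite) {N : ℕ} (hN : 1 ≤ N) {θ C : ℝ} (hθ0 : 0 ≤ θ) (hθ1 : θ ≤ 1)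
    (hC : 0 ≤ C)
    (hshort : ∀ l : List (V →L[ℝ] V), l.length < N → (∀ a ∈ l, a ∈ S) → ‖Pprod l‖ ≤ C)
    (hblock : ∀ l : List (V →L[ℝ] V), l.length = N → (∀ a ∈ l, a ∈ S) →
      ∃ k, 1 ≤ k ∧ k ≤ N ∧ ‖Pprod (l.take k)‖ ≤ θ) :
    ∀ n, ∀ l : List (V →L[ℝ] V), l.length = n → (∀ a ∈ l, a ∈ S) →
      ‖Pprod l‖ ≤ C * θ ^ (n / N) := by
  intro n
  induction n using Nat.strong_induction_on with
  | _ n ih =>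
    intro l hlen hmem
    by_cases hn : n < N
    · rw [Nat.div_eq_of_lt hn]
      simpa using hshort l (hlen ▸ hn) hmem
    · push_neg at hn
      have htakeN : (l.take N).length = N := by
        rw [List.length_take, hlen]; omega
      obtain ⟨k, hk1, hkN, hθk⟩ := hblock (l.take N) htakeN
        (fun a ha => hmem a (List.take_subset _ _ ha))
      rw [List.take_take, min_eq_left hkN] at hθk
      have hkn : k ≤ n := le_trans hkN hn
      have hdroplen : (l.drop k).length = n - k := by rw [List.length_drop, hlen]
      have hih : ‖Pprod (l.drop k)‖ ≤ C * θ ^ ((n - k) / N) :=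
        ih (n - k) (by omega) _ hdroplen (fun a ha => hmem a (List.drop_subset _ _ ha))
      have hmul : ‖Pprod l‖ ≤ ‖Pprod (l.drop k)‖ * ‖Pprod (l.take k)‖ := by
        rw [Pprod_take_drop l k]; exact norm_mul_le _ _
      have h1 : ‖Pprod l‖ ≤ (C * θ ^ ((n - k) / N)) * θ := by
        calc ‖Pprod l‖ ≤ ‖Pprod (l.drop k)‖ * ‖Pprod (l.take k)‖ := hmul
          _ ≤ (C * θ ^ ((n - k) / N)) * θ :=
              mul_le_mul hih (le_trans (le_of_eq rfl) hθk) (norm_nonneg _)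
                (by positivity)
      have hexp : n / N ≤ (n - k) / N + 1 := by
        have h2 : n ≤ (n - k) + N := by omega
        calc n / N ≤ ((n - k) + N) / N := Nat.div_le_div_right h2
          _ = (n - k) / N + 1 := Nat.add_div_right _ (by omega)
      have h3 : θ ^ ((n - k) / N + 1) ≤ θ ^ (n / N) :=
        pow_le_pow_of_le_one hθ0 hθ1 hexp
      calc ‖Pprod l‖ ≤ (C * θ ^ ((n - k) / N)) * θ := h1
        _ = C * θ ^ ((n - k) / N + 1) := by ring
        _ ≤ C * θ ^ (n / N) := by
            exact mul_le_mul_of_nonneg_left h3 hC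

lemma tendsto_aux {N : ℕ} (hN : 1 ≤ N) {θ C : ℝ} (hθ0 : 0 ≤ θ) (hθ1 : θ < 1) :
    Tendsto (fun n : ℕ => C * θ ^ (n / N)) atTop (nhds 0) := by
  have h1 : Tendsto (fun n : ℕ => n / N) atTop atTop :=
    tendsto_atTop_atTop.mpr fun b => ⟨b * N, fun n hn =>
      (Nat.le_div_iff_mul_le (by omega)).2 hn⟩
  have h2 := (tendsto_pow_atTop_nhds_zero_of_lt_one hθ0 hθ1).comp h1
  have h3 := h2.const_mul C
  simpa using h3

end Aux

/-- `σ̂(S) < 1` iff for every infinite sequence `a₁, a₂, ...` of elements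
of `S`, `‖aₙ ∘ ⋯ ∘ a₂ ∘ a₁‖ → 0` as `n → ∞`. -/
theorem jointSpecRad_lt_one_iff_all_sequences_tendsto_zero
    {V : Type*} [NormedAddCommGroup V] [NormedSpace ℝ V] [FiniteDimensional ℝ V]
    (S : Set (V →L[ℝ] V)) (hfin : S.Finite) (hne : S.Nonempty) :
    jointSpecRad S < 1 ↔
      ∀ a : ℕ → (V →L[ℝ] V), (∀ i, a i ∈ S) →
        Tendsto (fun n : ℕ => ‖((List.range n).reverse.map a).prod‖) atTop (nhds 0) := by
  constructor
  · -- forward direction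
    intro h a ha
    obtain ⟨N, hN, hσ⟩ := exists_sigmaN_lt_one hfin hne h
    -- constant bounding short words
    set C : ℝ := (Finset.range N).sup' ⟨0, Finset.mem_range.mpr (by omega)⟩ (sigmaN S) with hCdef
    have hC0 : 0 ≤ C :=
      le_trans (sigmaN_nonneg hfin hne 0)
        (Finset.le_sup' _ (Finset.mem_range.mpr (by omega)))
    have hshort : ∀ l : List (V →L[ℝ] V), l.length < N → (∀ a ∈ l, a ∈ S) → ‖Pprod l‖ ≤ C :=
      fun l hl hm => le_trans (norm_Pprod_le_sigmaN hfin rfl hm)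
        (Finset.le_sup' _ (Finset.mem_range.mpr hl))
    have hθ0 : 0 ≤ sigmaN S N := sigmaN_nonneg hfin hne N
    have hblock : ∀ l : List (V →L[ℝ] V), l.length = N → (∀ a ∈ l, a ∈ S) →
        ∃ k, 1 ≤ k ∧ k ≤ N ∧ ‖Pprod (l.take k)‖ ≤ sigmaN S N := by
      intro l hl hm
      refine ⟨N, hN, le_rfl, ?_⟩
      have htl : l.take N = l := by rw [← hl]; exact List.take_length
      rw [htl]
      exact norm_Pprod_le_sigmaN hfin hl hm
    have hdecay := decay_bound hfin hN hθ0 (le_of_lt hσ) hC0 hshort hblock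
    have key : ∀ n : ℕ, ‖((List.range n).reverse.map a).prod‖ ≤ C * sigmaN S N ^ (n / N) := by
      intro n
      have heq : (List.range n).reverse.map a = ((List.range n).map a).reverse := by
        rw [List.map_reverse]
      rw [heq]
      exact hdecay n ((List.range n).map a) (by simp)
        (fun x hx => by
          obtain ⟨i, _, rfl⟩ := List.mem_map.mp hx
          exact ha i)
    exact squeeze_zero (fun n => norm_nonneg _) key (tendsto_aux hN hθ0 hσ)
  · -- converse
    intro h
    -- Step A: there is N such that every word of length N has a short prefix of norm < 1
    have stepA : ∃ N, 1 ≤ N ∧ ∀ l : List (V →L[ℝ] V), l.length = N → (∀ a ∈ l, a ∈ S) →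
        ∃ k, 1 ≤ k ∧ k ≤ N ∧ ‖Pprod (l.take k)‖ < 1 := by
      by_contra hA
      push_neg at hA
      -- resistant words of every length exist
      have hres : ∀ N, ∃ l : List (V →L[ℝ] V), l.length = N ∧ (∀ a ∈ l, a ∈ S) ∧
          ∀ k, 1 ≤ k → k ≤ l.length → 1 ≤ ‖Pprod (l.take k)‖ := by
        intro N
        rcases Nat.eq_zero_or_pos N with hN0 | hN0
        · exact ⟨[], by simp [hN0], by simp, by intro k hk hk'; simp at hk'; omega⟩
        · obtain ⟨l, hlen, hmem, hk⟩ := hA N hN0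
          exact ⟨l, hlen, hmem, fun k h1 h2 => hk k h1 (hlen ▸ h2)⟩
      -- good words: extendable to arbitrarily long resistant words
      classical
      set Res : List (V →L[ℝ] V) → Prop := fun l =>
        (∀ a ∈ l, a ∈ S) ∧ ∀ k, 1 ≤ k → k ≤ l.length → 1 ≤ ‖Pprod (l.take k)‖ with hResDef
      set good : List (V →L[ℝ] V) → Prop := fun b =>
        ∀ N, ∃ l, b <+: l ∧ N ≤ l.length ∧ Res l with hgoodDef
      have res_prefix : ∀ {b l : List (V →L[ℝ] V)}, b <+: l → Res l → Res b := by
        rintro b l hpre ⟨hmem, hk⟩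
        have hb : b = l.take b.length := List.prefix_iff_eq_take.mp hpre
        constructor
        · exact fun a ha => hmem a (hpre.subset ha)
        · intro k h1 h2
          have : b.take k = l.take k := by
            rw [hb, List.take_take, min_eq_left h2]
          rw [this]
          exact hk k h1 (le_trans h2 (hpre.length_le))
      have good_res : ∀ {b : List (V →L[ℝ] V)}, good b → Res b := by
        intro b hb
        obtain ⟨l, hpre, _, hResl⟩ := hb 0
        exact res_prefix hpre hResl
      have good_nil : good ([] : List (V →L[ℝ] V)) := by
        intro N
        obtain ⟨l, hlen, hmem, hk⟩ := hres N
        exact ⟨l, List.nil_prefix, le_of_eq hlen.symm, hmem, hk⟩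
      -- extension step via pigeonhole
      have good_extend : ∀ b : List (V →L[ℝ] V), good b → ∃ x, x ∈ S ∧ good (b ++ [x]) := by
        intro b hb
        set m := b.length with hm
        set L : ℕ → List (V →L[ℝ] V) := fun N => (hb N).choose with hL
        have hLspec : ∀ N, b <+: L N ∧ N ≤ (L N).length ∧ Res (L N) := fun N => (hb N).choose_spec
        set g : ℕ → (V →L[ℝ] V) := fun N => (L N).getD m 0 with hg
        have hgS : ∀ N, m + 1 ≤ N → g N ∈ S := by
          intro N hN
          have hlen : m < (L N).length := lt_of_lt_of_le (by omega) (hLspec N).2.1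
          have : g N ∈ L N := by
            rw [hg]
            simp only [List.getD_eq_getElem?_getD]
            rw [List.getElem?_eq_getElem hlen]
            simpa using List.getElem_mem _
          exact (hLspec N).2.2.1 _ this
        have hcover : {N : ℕ | m + 1 ≤ N} ⊆ ⋃ x ∈ S, {N | m + 1 ≤ N ∧ g N = x} := by
          intro N hN
          exact Set.mem_biUnion (hgS N hN) ⟨hN, rfl⟩
        have hinf : {N : ℕ | m + 1 ≤ N}.Infinite := by
          have : {N : ℕ | m + 1 ≤ N} = Set.Ici (m + 1) := rfl
          rw [this]
          exact Set.Ici_infinite _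
        have : ∃ x ∈ S, {N | m + 1 ≤ N ∧ g N = x}.Infinite := by
          by_contra hfib
          push_neg at hfib
          exact hinf ((hfin.biUnion hfib).subset hcover)
        obtain ⟨x, hxS, hxinf⟩ := this
        refine ⟨x, hxS, ?_⟩
        intro N
        -- pick N' in the fiber with N' ≥ N
        have : ∃ N' ∈ {N | m + 1 ≤ N ∧ g N = x}, N ≤ N' := by
          by_contra hno
          push_neg at hno
          refine hxinf ((Set.finite_Iio N).subset ?_)
          intro N' hN'
          exact hno N' hN'
        obtain ⟨N', ⟨hN'm, hgN'⟩, hNN'⟩ := this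
        refine ⟨L N', ?_, le_trans hNN' (hLspec N').2.1, (hLspec N').2.2⟩
        -- b ++ [x] is a prefix of L N'
        have hlenN' : m < (L N').length := lt_of_lt_of_le (by omega) (hLspec N').2.1
        have hbtake : b = (L N').take m := by
          have := List.prefix_iff_eq_take.mp (hLspec N').1
          rwa [← hm] at this
        have hgetx : (L N')[m] = x := by
          rw [← hgN', hg]
          simp only [List.getD_eq_getElem?_getD]
          rw [List.getElem?_eq_getElem hlenN']
          simp
        have htakesucc : (L N').take (m + 1) = b ++ [x] := by
          rw [List.take_succ, List.getElem?_eq_getElem hlenN', hgetx, ← hbtake]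
          rfl
        rw [← htakesucc]
        exact List.take_prefix _ _
      -- build the infinite sequence by recursion
      set ext : List (V →L[ℝ] V) → (V →L[ℝ] V) := fun b =>
        if hx : ∃ x, x ∈ S ∧ good (b ++ [x]) then hx.choose else 0 with hext
      set chain : ℕ → List (V →L[ℝ] V) := fun n =>
        Nat.rec [] (fun _ b => b ++ [ext b]) n with hchain
      have chain_succ : ∀ n, chain (n + 1) = chain n ++ [ext (chain n)] := fun n => rfl
      have ext_spec : ∀ b : List (V →L[ℝ] V), good b → ext b ∈ S ∧ good (b ++ [ext b]) := by
        intro b hb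
        have hx : ∃ x, x ∈ S ∧ good (b ++ [x]) := by
          obtain ⟨x, hx1, hx2⟩ := good_extend b hb
          exact ⟨x, hx1, hx2⟩
        rw [hext]
        simp only [dif_pos hx]
        exact hx.choose_spec
      have chain_good : ∀ n, good (chain n) := by
        intro n
        induction n with
        | zero => exact good_nil
        | succ n ih =>
          rw [chain_succ]
          exact (ext_spec _ ih).2
      set a : ℕ → (V →L[ℝ] V) := fun n => ext (chain n) with ha
      have haS : ∀ i, a i ∈ S := fun i => (ext_spec _ (chain_good i)).1
      have chain_eq : ∀ n, chain n = (List.range n).map a := by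
        intro n
        induction n with
        | zero => rfl
        | succ n ih =>
          rw [List.range_succ, List.map_append, ← ih, chain_succ]
          rfl
      have chain_len : ∀ n, (chain n).length = n := by
        intro n; rw [chain_eq]; simp
      -- all partial products have norm ≥ 1
      have hlow : ∀ n, 1 ≤ n → 1 ≤ ‖((List.range n).reverse.map a).prod‖ := by
        intro n hn
        have hResn : Res (chain n) := good_res (chain_good n)
        have := hResn.2 n hn (le_of_eq (chain_len n).symm)
        rw [List.take_of_length_le (le_of_eq (chain_len n))] at this
        rw [chain_eq] at this
        have heq : (List.range n).reverse.map a = ((List.range n).map a).reverse := by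
          rw [List.map_reverse]
        rw [heq]
        exact this
      -- contradiction with tendsto 0
      have htd := h a haS
      have : ∀ᶠ n : ℕ in atTop, ‖((List.range n).reverse.map a).prod‖ < 1 :=
        htd.eventually (Filter.Tendsto.eventually_lt_const (by norm_num) tendsto_id) |>.mono
          (fun n hn => hn)
      obtain ⟨n, hn1, hn2⟩ := ((this.and (eventually_ge_atTop 1)).exists)
      exact absurd (hlow n hn2) (not_le.mpr hn1)
    -- Step B/C: from Step A get decay and conclude
    obtain ⟨N, hN, hblock'⟩ := stepA
    classical
    -- the finite set of possible "bad block" norms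
    haveI : Finite S := hfin.to_subtype
    -- θ := sup of norms of bad blocks
    set BadSet : Set ℝ := {x : ℝ | ∃ l : List (V →L[ℝ] V), l.length ≤ N ∧ (∀ a ∈ l, a ∈ S) ∧
        x = ‖Pprod l‖ ∧ x < 1} with hBadSet
    have hBadFin : BadSet.Finite := by
      have h1 : {l : List S | l.length ≤ N}.Finite := List.finite_length_le _ N
      have h2 : ((fun l : List S => ‖Pprod (l.map (Subtype.val))‖) '' {l | l.length ≤ N}).Finite :=
        h1.image _
      refine h2.subset ?_
      rintro x ⟨l, hlen, hmem, rfl, _⟩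
      refine ⟨l.attach.map (fun a => (⟨a.1, hmem a.1 a.2⟩ : S)), by simpa using hlen, ?_⟩
      simp [List.map_map, Function.comp]
    have hBadNe : BadSet.Nonempty := by
      obtain ⟨s, hs⟩ := hne
      obtain ⟨k, hk1, hkN, hklt⟩ := hblock' (List.replicate N s) (by simp)
        (fun a ha => by rw [List.eq_of_mem_replicate ha]; exact hs)
      refine ⟨‖Pprod ((List.replicate N s).take k)‖, (List.replicate N s).take k, ?_, ?_, rfl, hklt⟩
      · simp [List.length_take]
      · intro a ha
        rw [List.eq_of_mem_replicate (List.take_subset _ _ ha)]; exact hs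
    set θ : ℝ := sSup BadSet with hθdef
    have hθmem : θ ∈ BadSet := hBadNe.csSup_mem hBadFin
    have hθ1 : θ < 1 := by
      obtain ⟨l, _, _, hx, hlt⟩ := hθmem
      rw [hx] at hlt ⊢; exact hlt
    have hθ0 : 0 ≤ θ := by
      obtain ⟨l, _, _, hx, _⟩ := hθmem
      rw [hx]; exact norm_nonneg _
    have hle_θ : ∀ l : List (V →L[ℝ] V), l.length ≤ N → (∀ a ∈ l, a ∈ S) →
        ‖Pprod l‖ < 1 → ‖Pprod l‖ ≤ θ := by
      intro l h1 h2 h3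
      exact le_csSup hBadFin.bddAbove ⟨l, h1, h2, rfl, h3⟩
    -- constant for short words
    set C : ℝ := (Finset.range N).sup' ⟨0, Finset.mem_range.mpr (by omega)⟩ (sigmaN S) with hCdef
    have hC0 : 0 ≤ C :=
      le_trans (sigmaN_nonneg hfin hne 0)
        (Finset.le_sup' _ (Finset.mem_range.mpr (by omega)))
    have hshort : ∀ l : List (V →L[ℝ] V), l.length < N → (∀ a ∈ l, a ∈ S) → ‖Pprod l‖ ≤ C :=
      fun l hl hm => le_trans (norm_Pprod_le_sigmaN hfin rfl hm)
        (Finset.le_sup' _ (Finset.mem_range.mpr hl))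
    have hblock : ∀ l : List (V →L[ℝ] V), l.length = N → (∀ a ∈ l, a ∈ S) →
        ∃ k, 1 ≤ k ∧ k ≤ N ∧ ‖Pprod (l.take k)‖ ≤ θ := by
      intro l hl hm
      obtain ⟨k, hk1, hkN, hklt⟩ := hblock' l hl hm
      refine ⟨k, hk1, hkN, hle_θ _ ?_ (fun a ha => hm a (List.take_subset _ _ ha)) hklt⟩
      rw [List.length_take, hl]; omega
    have hdecay := decay_bound hfin hN hθ0 (le_of_lt hθ1) hC0 hshort hblock
    -- pick n large with C * θ^(n/N) < 1
    have htend := tendsto_aux (C := C) hN hθ0 hθ1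
    have hev : ∀ᶠ n : ℕ in atTop, C * θ ^ (n / N) < 1 :=
      htend.eventually (Filter.Tendsto.eventually_lt_const (by norm_num) tendsto_id) |>.mono
        (fun n hn => hn)
    obtain ⟨n, hnlt, hn1⟩ := (hev.and (eventually_ge_atTop 1)).exists
    refine jointSpecRad_lt_one_of hfin hne hn1 ?_
    refine lt_of_le_of_lt (sigmaN_le hne ?_) hnlt
    intro l hlen hmem
    have : ‖Pprod l.reverse‖ ≤ C * θ ^ (n / N) :=
      hdecay n l.reverse (by simpa using hlen) (fun a ha => hmem a (List.mem_reverse.mp ha))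
    simpa [Pprod] using this
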